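/- arXiv:1906.07813 — 5 statements merged into one kernel-verified Lean document; each statement's English description precedes it below -/
import Mathlib

section
/- The Study quadric is invariant under multiplication by elements of 𝔻ₛ: if a dual quaternion σ = p + εq has Study coordinates satisfying x₀y₀ + x₁y₁ + x₂y₂ + x₃y₃ = 0, and τ ∈ 𝔻ₛ (i.e. τ has nonzero primal part and ττ* is a nonnegative real), then both products στ and τσ also have Study coordinates satisfying the Study equation. -/
open Quaternion

noncomputable section

/-- The ℝ-algebra of dual quaternions `𝔻 = ℍ + εℍ` with `ε² = 0`. -/
abbrev 𝔻 := DualNumber ℍ[ℝ]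

/-- The dual quaternion `p + εq`. -/
def dq (p q : ℍ[ℝ]) : 𝔻 := (p, q)

/-- The conjugate `σ* = p* + εq*` of a dual quaternion `σ = p + εq`. -/
def dconj (σ : 𝔻) : 𝔻 := dq (star σ.fst) (star σ.snd)

/-- The Study equation `x₀y₀ + x₁y₁ + x₂y₂ + x₃y₃ = 0` in the Study coordinates of a dual
quaternion `σ = p + εq`. -/
def studyEq (σ : 𝔻) : Prop :=
  σ.fst.re * σ.snd.re + σ.fst.imI * σ.snd.imI + σ.fst.imJ * σ.snd.imJ
    + σ.fst.imK * σ.snd.imK = 0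

/-! The Study form `S(p + εq)` is the Euclidean inner product `⟪p, q⟫ = Re (p q*)`. Since left
and right multiplication by a quaternion `a` scale inner products by `|a|²`, the Study form of a
product is `S(σ₁σ₂) = |p₁|² S(σ₂) + |p₂|² S(σ₁)`; and for `τ = p + εq` the dual part of `ττ*` is
`pq* + qp*`, whose real part is `2 S(τ)`, so `ττ*` being real forces `S(τ) = 0`. -/

open scoped RealInnerProductSpace

namespace Quaternion

theorem inner_mul_mul_left (a b c : ℍ[ℝ]) : ⟪a * b, a * c⟫ = normSq a * ⟪b, c⟫ := by
  simp only [inner_def, normSq_def', star_mul, re_mul, imI_mul, imJ_mul, imK_mul, re_star,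
    imI_star, imJ_star, imK_star]
  ring

theorem inner_mul_mul_right (a b c : ℍ[ℝ]) : ⟪b * a, c * a⟫ = normSq a * ⟪b, c⟫ := by
  simp only [inner_def, normSq_def', star_mul, re_mul, imI_mul, imJ_mul, imK_mul, re_star,
    imI_star, imJ_star, imK_star]
  ring

end Quaternion

theorem studyEq_iff_inner (σ : 𝔻) : studyEq σ ↔ ⟪σ.fst, σ.snd⟫ = 0 := by
  rw [studyEq, inner_def]
  simp only [re_mul, re_star, imI_star, imJ_star, imK_star, mul_neg, sub_neg_eq_add]

theorem inner_fst_snd_mul (σ τ : 𝔻) :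
    ⟪(σ * τ).fst, (σ * τ).snd⟫ =
      normSq σ.fst * ⟪τ.fst, τ.snd⟫ + normSq τ.fst * ⟪σ.fst, σ.snd⟫ := by
  rw [TrivSqZeroExt.fst_mul, TrivSqZeroExt.snd_mul, smul_eq_mul, MulOpposite.smul_eq_mul_unop,
    MulOpposite.unop_op, inner_add_right, inner_mul_mul_left, inner_mul_mul_right]

theorem inner_fst_snd_eq_zero_of_snd_mul_dconj_eq_zero {τ : 𝔻}
    (h : (τ * dconj τ).snd = 0) : ⟪τ.fst, τ.snd⟫ = 0 := by
  have hsnd : (τ * dconj τ).snd = τ.fst * star τ.snd + τ.snd * star τ.fst := rfl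
  have hre := congrArg QuaternionAlgebra.re (hsnd.symm.trans h)
  rw [re_add, ← inner_def, ← inner_def, real_inner_comm τ.fst, Quaternion.re_zero] at hre
  linarith

theorem studyEq_mul {σ τ : 𝔻} (hσ : studyEq σ) (hτ : studyEq τ) : studyEq (σ * τ) := by
  rw [studyEq_iff_inner] at *
  rw [inner_fst_snd_mul, hσ, hτ, mul_zero, mul_zero, add_zero]

theorem stmt5_general (σ τ : 𝔻) (hσ : studyEq σ)
    (hτ₂ : ∃ r : ℝ, 0 ≤ r ∧ τ * dconj τ = algebraMap ℝ 𝔻 r) :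
    studyEq (σ * τ) ∧ studyEq (τ * σ) := by
  obtain ⟨r, -, hr⟩ := hτ₂
  have hτ : studyEq τ := by
    rw [studyEq_iff_inner]
    refine inner_fst_snd_eq_zero_of_snd_mul_dconj_eq_zero ?_
    rw [hr, TrivSqZeroExt.algebraMap_eq_inl', TrivSqZeroExt.snd_inl]
  exact ⟨studyEq_mul hσ hτ, studyEq_mul hτ hσ⟩

/-- The Study quadric is invariant under multiplication by elements of `𝔻ₛ`: if a dual
quaternion `σ` satisfies the Study equation and `τ ∈ 𝔻ₛ` (i.e. `τ` has nonzero primal part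
and `ττ*` is a nonnegative real), then both `στ` and `τσ` also satisfy the Study equation. -/
theorem stmt5 (σ τ : 𝔻) (hσ : studyEq σ) (hτ₁ : τ.fst ≠ 0)
    (hτ₂ : ∃ r : ℝ, 0 ≤ r ∧ τ * dconj τ = algebraMap ℝ 𝔻 r) :
    studyEq (σ * τ) ∧ studyEq (τ * σ) :=
  stmt5_general σ τ hσ hτ₂
end
end

section
/- For all real parameters v, d, a, l, the Denavit–Hartenberg dual quaternion σ(v, d, a, l) := (1 + v·k)(1 + ε(d/2)·k)(1 + ε(a/2)·i)(1 + l·i) satisfies σσ* = (1 + v²)(1 + l²) (a positive real number); in particular σ ∈ 𝔻ₛ and its Study coordinates satisfy the Study equation x₀y₀ + x₁y₁ + x₂y₂ + x₃y₃ = 0 with x₀² + x₁² + x₂² + x₃² ≠ 0. -/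
open Quaternion

noncomputable section

/-- The quaternion unit `i`. -/
def iq : ℍ[ℝ] := ⟨0, 1, 0, 0⟩

/-- The quaternion unit `k`. -/
def kq : ℍ[ℝ] := ⟨0, 0, 0, 1⟩

/-- `R_z(v) = 1 + v·k`, rotation about the z-axis with half-angle tangent `v`. -/
def Rz (v : ℝ) : 𝔻 := dq (1 + v • kq) 0

/-- `R_x(l) = 1 + l·i`, rotation about the x-axis with half-angle tangent `l`. -/
def Rx (l : ℝ) : 𝔻 := dq (1 + l • iq) 0

/-- `T_z(d) = 1 + ε(d/2)·k`, translation by `d` along the z-axis. -/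
def Tz (d : ℝ) : 𝔻 := dq 1 ((d / 2) • kq)

/-- `T_x(a) = 1 + ε(a/2)·i`, translation by `a` along the x-axis. -/
def Tx (a : ℝ) : 𝔻 := dq 1 ((a / 2) • iq)

/-! Since `(στ)* = τ*σ*` and real scalars are central, `σσ*` is multiplicative on dual quaternions
whose norm `σσ*` is real, and each Denavit–Hartenberg factor has real norm (`1 + v²`, `1`, `1`,
`1 + l²`). Writing `σ = p + εq`, the primal part of `σσ* = r` is `|p|² = r` and the dual part is
`pq* + qp* = 0`, whose real part is twice the Study form `x₀y₀ + x₁y₁ + x₂y₂ + x₃y₃`. -/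

lemma dconj_mul (σ τ : 𝔻) : dconj (σ * τ) = dconj τ * dconj σ := by
  refine TrivSqZeroExt.ext (star_mul _ _) ?_
  simp only [dconj, dq, TrivSqZeroExt.snd_mul, TrivSqZeroExt.snd_mk, smul_eq_mul,
    MulOpposite.smul_eq_mul_unop, MulOpposite.unop_op, star_add, star_mul]
  exact add_comm _ _

lemma mul_dconj_eq_algebraMap_iff (σ : 𝔻) (r : ℝ) :
    σ * dconj σ = algebraMap ℝ 𝔻 r ↔
      normSq σ.fst = r ∧ σ.fst * star σ.snd + σ.snd * star σ.fst = 0 := by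
  rw [TrivSqZeroExt.algebraMap_eq_inl', TrivSqZeroExt.ext_iff, TrivSqZeroExt.fst_mul,
    TrivSqZeroExt.snd_mul, TrivSqZeroExt.fst_inl, TrivSqZeroExt.snd_inl, Quaternion.algebraMap_def]
  simp only [dconj, dq, TrivSqZeroExt.fst_mk, TrivSqZeroExt.snd_mk, smul_eq_mul,
    MulOpposite.smul_eq_mul_unop, MulOpposite.unop_op, self_mul_star, Quaternion.coe_inj]

lemma mul_mul_dconj_mul {σ τ : 𝔻} {r s : ℝ} (hσ : σ * dconj σ = algebraMap ℝ 𝔻 r)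
    (hτ : τ * dconj τ = algebraMap ℝ 𝔻 s) :
    σ * τ * dconj (σ * τ) = algebraMap ℝ 𝔻 (r * s) := by
  rw [dconj_mul, mul_assoc, ← mul_assoc τ, hτ, Algebra.commutes, ← mul_assoc, hσ, map_mul]

lemma dq_zero_mul_dconj (p : ℍ[ℝ]) : dq p 0 * dconj (dq p 0) = algebraMap ℝ 𝔻 (normSq p) := by
  rw [mul_dconj_eq_algebraMap_iff]
  simp [dq]

lemma dq_one_mul_dconj {q : ℍ[ℝ]} (hq : q.re = 0) :
    dq 1 q * dconj (dq 1 q) = algebraMap ℝ 𝔻 1 := by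
  rw [mul_dconj_eq_algebraMap_iff]
  simp [dq, star_add_self, hq]

lemma Rz_mul_dconj (v : ℝ) : Rz v * dconj (Rz v) = algebraMap ℝ 𝔻 (1 + v ^ 2) := by
  rw [Rz, dq_zero_mul_dconj, normSq_def']
  congr 1
  simp only [re_add, imI_add, imJ_add, imK_add, re_smul, imI_smul, imJ_smul, imK_smul]
  simp [kq]

lemma Rx_mul_dconj (l : ℝ) : Rx l * dconj (Rx l) = algebraMap ℝ 𝔻 (1 + l ^ 2) := by
  rw [Rx, dq_zero_mul_dconj, normSq_def']
  congr 1
  simp only [re_add, imI_add, imJ_add, imK_add, re_smul, imI_smul, imJ_smul, imK_smul]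
  simp [iq]

lemma Tz_mul_dconj (d : ℝ) : Tz d * dconj (Tz d) = algebraMap ℝ 𝔻 1 :=
  dq_one_mul_dconj (by rw [re_smul]; simp [kq])

lemma Tx_mul_dconj (a : ℝ) : Tx a * dconj (Tx a) = algebraMap ℝ 𝔻 1 :=
  dq_one_mul_dconj (by rw [re_smul]; simp [iq])

lemma study_equation_of_mul_dconj_eq_algebraMap {σ : 𝔻} {r : ℝ}
    (h : σ * dconj σ = algebraMap ℝ 𝔻 r) :
    σ.fst.re * σ.snd.re + σ.fst.imI * σ.snd.imI + σ.fst.imJ * σ.snd.imJ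
      + σ.fst.imK * σ.snd.imK = 0 := by
  have h_re := congrArg (·.re) ((mul_dconj_eq_algebraMap_iff σ r).1 h).2
  simp only [re_add, re_mul, re_star, imI_star, imJ_star, imK_star, re_zero] at h_re
  linarith

/-- For all real `v, d, a, l`, the Denavit–Hartenberg dual quaternion
`σ(v,d,a,l) = R_z(v)T_z(d)T_x(a)R_x(l)` satisfies `σσ* = (1+v²)(1+l²)` (a positive real
number); in particular `σ ∈ 𝔻ₛ` and its Study coordinates satisfy the Study equation
`x₀y₀ + x₁y₁ + x₂y₂ + x₃y₃ = 0` with `x₀² + x₁² + x₂² + x₃² ≠ 0`. -/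
theorem stmt6 (v d a l : ℝ) (σ : 𝔻) (hσ : σ = Rz v * Tz d * Tx a * Rx l) :
    σ * dconj σ = algebraMap ℝ 𝔻 ((1 + v ^ 2) * (1 + l ^ 2)) ∧
    (0 : ℝ) < (1 + v ^ 2) * (1 + l ^ 2) ∧
    (σ.fst ≠ 0 ∧ ∃ r : ℝ, 0 ≤ r ∧ σ * dconj σ = algebraMap ℝ 𝔻 r) ∧
    σ.fst.re * σ.snd.re + σ.fst.imI * σ.snd.imI + σ.fst.imJ * σ.snd.imJ
        + σ.fst.imK * σ.snd.imK = 0 ∧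
    σ.fst.re ^ 2 + σ.fst.imI ^ 2 + σ.fst.imJ ^ 2 + σ.fst.imK ^ 2 ≠ 0 := by
  have hnorm : σ * dconj σ = algebraMap ℝ 𝔻 ((1 + v ^ 2) * (1 + l ^ 2)) := by
    have h := mul_mul_dconj_mul (mul_mul_dconj_mul (mul_mul_dconj_mul (Rz_mul_dconj v)
      (Tz_mul_dconj d)) (Tx_mul_dconj a)) (Rx_mul_dconj l)
    rwa [mul_one, mul_one, ← hσ] at h
  have hpos : (0 : ℝ) < (1 + v ^ 2) * (1 + l ^ 2) := by positivity
  have hnormSq : normSq σ.fst = (1 + v ^ 2) * (1 + l ^ 2) :=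
    ((mul_dconj_eq_algebraMap_iff σ _).1 hnorm).1
  have hfst : σ.fst ≠ 0 := normSq_ne_zero.1 (hnormSq ▸ hpos.ne')
  refine ⟨hnorm, hpos, ⟨hfst, _, hpos.le, hnorm⟩,
    study_equation_of_mul_dconj_eq_algebraMap hnorm, ?_⟩
  rw [← normSq_def', hnormSq]
  exact hpos.ne'
end
end

section
/- For all real v₂, d₃, a₂, l₂, the Study coordinates (x₀, x₁, x₂, x₃, y₀, y₁, y₂, y₃) of the dual quaternion (1 + v₂·k)(1 + ε(a₂/2)·i)(1 + l₂·i)(1 + ε(d₃/2)·k) satisfy the four linear equations: −l₂x₀ + x₁ = 0; a₂(l₂² − 1)x₀ + 2l₂y₀ + 2y₁ = 0; a₂(l₂² − 1)x₃ + 2y₂ + 2l₂y₃ = 0; x₂ − l₂x₃ = 0. That is, the kinematic image V₁ of the 2-chain R_z(v₂)T_x(a₂)R_x(l₂)T_z(d₃) (an RP chain with joint variables v₂, d₃) is contained in the linear 3-space defined by these equations. -/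
open Quaternion

noncomputable section

theorem dq_mul_dq (p q p' q' : ℍ[ℝ]) : dq p q * dq p' q' = dq (p * p') (p * q' + q * p') :=
  rfl

theorem Rz_mul_Tx_mul_Rx_mul_Tz (v a l d : ℝ) :
    Rz v * Tx a * Rx l * Tz d =
      dq ⟨1, l, v * l, v⟩
        ⟨-(a * l + v * d) / 2, (a + v * d * l) / 2, (v * a - d * l) / 2, (d - v * a * l) / 2⟩ := by
  simp only [Rz, Tx, Rx, Tz, dq_mul_dq]
  -- `iq` and `kq` are unfolded last: the bare literals no longer match the `ℍ[ℝ]` simp lemmas.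
  congr 1 <;> ext <;> simp [Quaternion.re_smul] <;> simp only [iq, kq] <;> ring

/-- For all real `v₂, d₃, a₂, l₂`, the Study coordinates of the dual quaternion
`R_z(v₂)T_x(a₂)R_x(l₂)T_z(d₃)` satisfy the four linear equations `−l₂x₀ + x₁ = 0`,
`a₂(l₂² − 1)x₀ + 2l₂y₀ + 2y₁ = 0`, `a₂(l₂² − 1)x₃ + 2y₂ + 2l₂y₃ = 0`, `x₂ − l₂x₃ = 0`;
that is, the kinematic image of the RP 2-chain is contained in the linear 3-space defined by
these equations. -/
theorem stmt8 (v₂ d₃ a₂ l₂ : ℝ) (σ : 𝔻) (hσ : σ = Rz v₂ * Tx a₂ * Rx l₂ * Tz d₃) :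
    -l₂ * σ.fst.re + σ.fst.imI = 0 ∧
    a₂ * (l₂ ^ 2 - 1) * σ.fst.re + 2 * l₂ * σ.snd.re + 2 * σ.snd.imI = 0 ∧
    a₂ * (l₂ ^ 2 - 1) * σ.fst.imK + 2 * σ.snd.imJ + 2 * l₂ * σ.snd.imK = 0 ∧
    σ.fst.imJ - l₂ * σ.fst.imK = 0 := by
  subst hσ
  rw [Rz_mul_Tx_mul_Rx_mul_Tz]
  refine ⟨?_, ?_, ?_, ?_⟩ <;> simp only [dq, TrivSqZeroExt.fst, TrivSqZeroExt.snd] <;> ring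
end
end

section
/- Fix real numbers a₁ and l₁ with (a₁, l₁) ≠ (0, 0). Every tuple (x₀, x₁, x₂, x₃, y₀, y₁, y₂, y₃) ∈ ℝ⁸ satisfying the four linear equations a₁l₁x₀ + 2y₀ = 0, −a₁x₁ + 2l₁y₁ = 0, −a₁x₂ + 2l₁y₂ = 0, a₁l₁x₃ + 2y₃ = 0 also satisfies the Study equation x₀y₀ + x₁y₁ + x₂y₂ + x₃y₃ = 0 if and only if a₁ = 0 or l₁ = 0. That is, the linear 3-space containing the workspace of the RR chain lies in the Study quadric S exactly when a₁ or l₁ vanishes. -/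
/-!
If `a₁ l₁ ≠ 0`, the point `x = (1, 2 l₁, 0, 0)`, `y = (-a₁ l₁ / 2, a₁, 0, 0)` lies in the linear
space but its Study form is `3 a₁ l₁ / 2 ≠ 0`. Conversely, if `a₁ = 0` (so `l₁ ≠ 0`) the equations
force `y = 0`, and if `l₁ = 0` (so `a₁ ≠ 0`) they force `y₀ = y₃ = 0` and `x₁ = x₂ = 0`; either way
every product `xᵢ yᵢ` of the Study form vanishes.
-/

theorem study_form_eq_zero_of_dh_distance_eq_zero {a l x₀ x₁ x₂ x₃ y₀ y₁ y₂ y₃ : ℝ}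
    (ha : a = 0) (hl : l ≠ 0)
    (e₀ : a * l * x₀ + 2 * y₀ = 0) (e₁ : -a * x₁ + 2 * l * y₁ = 0)
    (e₂ : -a * x₂ + 2 * l * y₂ = 0) (e₃ : a * l * x₃ + 2 * y₃ = 0) :
    x₀ * y₀ + x₁ * y₁ + x₂ * y₂ + x₃ * y₃ = 0 := by
  subst ha
  have hy₀ : y₀ = 0 := by linarith
  have hy₁ : y₁ = 0 := (mul_eq_zero.mp (by linarith : l * y₁ = 0)).resolve_left hl
  have hy₂ : y₂ = 0 := (mul_eq_zero.mp (by linarith : l * y₂ = 0)).resolve_left hl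
  have hy₃ : y₃ = 0 := by linarith
  simp [hy₀, hy₁, hy₂, hy₃]

theorem study_form_eq_zero_of_twist_eq_zero {a l x₀ x₁ x₂ x₃ y₀ y₁ y₂ y₃ : ℝ}
    (ha : a ≠ 0) (hl : l = 0)
    (e₀ : a * l * x₀ + 2 * y₀ = 0) (e₁ : -a * x₁ + 2 * l * y₁ = 0)
    (e₂ : -a * x₂ + 2 * l * y₂ = 0) (e₃ : a * l * x₃ + 2 * y₃ = 0) :
    x₀ * y₀ + x₁ * y₁ + x₂ * y₂ + x₃ * y₃ = 0 := by
  subst hl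
  have hy₀ : y₀ = 0 := by linarith
  have hx₁ : x₁ = 0 := (mul_eq_zero.mp (by linarith : a * x₁ = 0)).resolve_left ha
  have hx₂ : x₂ = 0 := (mul_eq_zero.mp (by linarith : a * x₂ = 0)).resolve_left ha
  have hy₃ : y₃ = 0 := by linarith
  simp [hy₀, hx₁, hx₂, hy₃]

theorem mul_eq_zero_of_study_form_eq_zero {a l : ℝ}
    (hS : ∀ x₀ x₁ x₂ x₃ y₀ y₁ y₂ y₃ : ℝ,
        a * l * x₀ + 2 * y₀ = 0 →
        -a * x₁ + 2 * l * y₁ = 0 →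
        -a * x₂ + 2 * l * y₂ = 0 →
        a * l * x₃ + 2 * y₃ = 0 →
        x₀ * y₀ + x₁ * y₁ + x₂ * y₂ + x₃ * y₃ = 0) :
    a * l = 0 := by
  have hwitness := hS 1 (2 * l) 0 0 (-(a * l) / 2) a 0 0 (by ring) (by ring) (by ring) (by ring)
  linarith

/-- Fix real numbers `a₁` and `l₁` with `(a₁, l₁) ≠ (0, 0)`.  Every tuple
`(x₀,…,x₃,y₀,…,y₃) ∈ ℝ⁸` satisfying the four linear equations `a₁l₁x₀ + 2y₀ = 0`,
`−a₁x₁ + 2l₁y₁ = 0`, `−a₁x₂ + 2l₁y₂ = 0`, `a₁l₁x₃ + 2y₃ = 0` also satisfies the Study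
equation `x₀y₀ + x₁y₁ + x₂y₂ + x₃y₃ = 0` if and only if `a₁ = 0` or `l₁ = 0`; that is, the
linear 3-space containing the workspace of the RR chain lies in the Study quadric exactly
when `a₁` or `l₁` vanishes. -/
theorem stmt11 (a₁ l₁ : ℝ) (h : (a₁, l₁) ≠ (0, 0)) :
    (∀ x₀ x₁ x₂ x₃ y₀ y₁ y₂ y₃ : ℝ,
        a₁ * l₁ * x₀ + 2 * y₀ = 0 →
        -a₁ * x₁ + 2 * l₁ * y₁ = 0 →
        -a₁ * x₂ + 2 * l₁ * y₂ = 0 →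
        a₁ * l₁ * x₃ + 2 * y₃ = 0 →
        x₀ * y₀ + x₁ * y₁ + x₂ * y₂ + x₃ * y₃ = 0) ↔ (a₁ = 0 ∨ l₁ = 0) := by
  refine ⟨fun hS => mul_eq_zero.mp (mul_eq_zero_of_study_form_eq_zero hS), ?_⟩
  rintro (ha | hl) _ _ _ _ _ _ _ _
  · exact study_form_eq_zero_of_dh_distance_eq_zero ha (by rintro rfl; exact h (by rw [ha]))
  · exact study_form_eq_zero_of_twist_eq_zero (by rintro rfl; exact h (by rw [hl])) hl
end

section
/- For all real a₂, l₂, the 4×8 real matrix A = [[0,0,0,0,−2,2l₂,0,0],[0,0,4l₂,4,0,0,2a₂,−2a₂l₂],[0,0,0,0,0,0,−2l₂,2],[4,4l₂,0,0,−2a₂l₂,2a₂,0,0]] has rank 4, and its kernel is exactly the linear span of the four vectors (−l₂,1,0,0,0,0,0,0), (a₂(l₂²−1),0,0,0,2l₂,2,0,0), (0,0,0,a₂(l₂²−1),0,0,2,2l₂), and (0,0,1,−l₂,0,0,0,0) in ℝ⁸. -/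
/-!
Every equation of the system `A *ᵥ x = 0` can be solved for one of `x₀, x₃, x₄, x₇`,
leaving `x₁, x₂, x₅, x₆` free; in these coordinates the four given vectors are (multiples
of) the standard basis, so each kernel vector is the combination with coefficients
`x₁, x₅ / 2, x₆ / 2, x₂`. Hence the kernel has dimension at most 4, and rank–nullity
together with `rank A ≤ 4` (four rows) gives `rank A = 4`.
-/

open Matrix Module Submodule

theorem Matrix.rank_eq_card_height_of_ker_le_span_range {m n ι K : Type*}
    [Fintype m] [Fintype n] [Fintype ι] [Field K] (A : Matrix m n K) (v : ι → n → K)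
    (hker : LinearMap.ker A.mulVecLin ≤ span K (Set.range v))
    (hcard : Fintype.card m + Fintype.card ι ≤ Fintype.card n) :
    A.rank = Fintype.card m := by
  have hnullity : finrank K (LinearMap.ker A.mulVecLin) ≤ Fintype.card ι :=
    (Submodule.finrank_mono hker).trans (finrank_range_le_card v)
  have hrank_nullity := LinearMap.finrank_range_add_finrank_ker A.mulVecLin
  rw [finrank_fintype_fun_eq_card] at hrank_nullity
  have hrank_le := A.rank_le_card_height
  have hrank : A.rank = finrank K (LinearMap.range A.mulVecLin) := rfl
  omega

section
variable {K : Type*} [Field K] (a l : K)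

/-- The conditions `z₀ = z₁ = z₂ = z₃ = 0` on the hyperplane coefficients `(a, …, h)`, each
divided by 2. -/
def chainMatrix : Matrix (Fin 4) (Fin 8) K :=
  !![0, 0, 0, 0, -2, 2 * l, 0, 0;
     0, 0, 4 * l, 4, 0, 0, 2 * a, -2 * a * l;
     0, 0, 0, 0, 0, 0, -2 * l, 2;
     4, 4 * l, 0, 0, -2 * a * l, 2 * a, 0, 0]

def chainKerVec : Fin 4 → Fin 8 → K :=
  ![![-l, 1, 0, 0, 0, 0, 0, 0],
    ![a * (l ^ 2 - 1), 0, 0, 0, 2 * l, 2, 0, 0],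
    ![0, 0, 0, a * (l ^ 2 - 1), 0, 0, 2, 2 * l],
    ![0, 0, 1, -l, 0, 0, 0, 0]]

theorem chainMatrix_mulVec_eq_zero_iff {x : Fin 8 → K} :
    chainMatrix a l *ᵥ x = 0 ↔
      -2 * x 4 + 2 * l * x 5 = 0 ∧
      4 * l * x 2 + 4 * x 3 + 2 * a * x 6 - 2 * a * l * x 7 = 0 ∧
      -2 * l * x 6 + 2 * x 7 = 0 ∧
      4 * x 0 + 4 * l * x 1 - 2 * a * l * x 4 + 2 * a * x 5 = 0 := by
  simp only [funext_iff, Fin.forall_fin_succ]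
  simp [chainMatrix, mulVec, dotProduct, Fin.sum_univ_eight, sub_eq_add_neg]

theorem chainMatrix_mulVec_chainKerVec (i : Fin 4) :
    chainMatrix a l *ᵥ chainKerVec a l i = 0 := by
  rw [chainMatrix_mulVec_eq_zero_iff]
  fin_cases i <;> refine ⟨?_, ?_, ?_, ?_⟩ <;> simp [chainKerVec] <;> ring

variable [CharZero K]

theorem eq_sum_chainKerVec_of_mulVec_eq_zero {x : Fin 8 → K} (hx : chainMatrix a l *ᵥ x = 0) :
    ∑ i, ![x 1, x 5 / 2, x 6 / 2, x 2] i • chainKerVec a l i = x := by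
  obtain ⟨h₀, h₁, h₂, h₃⟩ := (chainMatrix_mulVec_eq_zero_iff a l).1 hx
  ext j
  fin_cases j <;>
    simp only [chainKerVec, Fin.sum_univ_four, Finset.sum_apply, Pi.smul_apply, smul_eq_mul,
      cons_val, Fin.isValue, Fin.reduceFinMk]
  · linear_combination -(1/4) * h₃ + (a * l / 4) * h₀
  · ring
  · ring
  · linear_combination -(1/4) * h₁ - (a * l / 4) * h₂
  · linear_combination (1/2) * h₀
  · ring
  · ring
  · linear_combination -(1/2) * h₂

theorem ker_chainMatrix_mulVecLin :
    LinearMap.ker (chainMatrix a l).mulVecLin = span K (Set.range (chainKerVec a l)) := by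
  refine le_antisymm (fun x hx ↦ ?_) (span_le.2 ?_)
  · exact (mem_span_range_iff_exists_fun K).2 ⟨_, eq_sum_chainKerVec_of_mulVec_eq_zero a l hx⟩
  · rintro _ ⟨i, rfl⟩
    exact chainMatrix_mulVec_chainKerVec a l i

theorem rank_chainMatrix : (chainMatrix a l).rank = 4 :=
  (chainMatrix a l).rank_eq_card_height_of_ker_le_span_range _
    (ker_chainMatrix_mulVecLin a l).le (by simp)

end

/-- For all real `a₂, l₂`, the 4×8 real matrix
`A = [[0,0,0,0,−2,2l₂,0,0],[0,0,4l₂,4,0,0,2a₂,−2a₂l₂],[0,0,0,0,0,0,−2l₂,2],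
[4,4l₂,0,0,−2a₂l₂,2a₂,0,0]]` has rank 4, and its kernel is exactly the linear span of the
four vectors `(−l₂,1,0,0,0,0,0,0)`, `(a₂(l₂²−1),0,0,0,2l₂,2,0,0)`,
`(0,0,0,a₂(l₂²−1),0,0,2,2l₂)` and `(0,0,1,−l₂,0,0,0,0)` in `ℝ⁸`. -/
theorem stmt13 (a₂ l₂ : ℝ)
    (A : Matrix (Fin 4) (Fin 8) ℝ)
    (hA : A = !![0, 0, 0, 0, -2, 2 * l₂, 0, 0;
                 0, 0, 4 * l₂, 4, 0, 0, 2 * a₂, -2 * a₂ * l₂;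
                 0, 0, 0, 0, 0, 0, -2 * l₂, 2;
                 4, 4 * l₂, 0, 0, -2 * a₂ * l₂, 2 * a₂, 0, 0]) :
    A.rank = 4 ∧
    LinearMap.ker A.mulVecLin = Submodule.span ℝ
      {![-l₂, 1, 0, 0, 0, 0, 0, 0],
       ![a₂ * (l₂ ^ 2 - 1), 0, 0, 0, 2 * l₂, 2, 0, 0],
       ![0, 0, 0, a₂ * (l₂ ^ 2 - 1), 0, 0, 2, 2 * l₂],
       ![0, 0, 1, -l₂, 0, 0, 0, 0]} := by
  have hA' : A = chainMatrix a₂ l₂ := hA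
  subst hA'
  refine ⟨rank_chainMatrix a₂ l₂, ?_⟩
  rw [ker_chainMatrix_mulVecLin]
  simp only [chainKerVec, range_cons, range_empty, Set.union_empty, Set.singleton_union]
end
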